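/- arXiv:1701.07351 — 11 statements merged into one kernel-verified Lean document; each statement's English description precedes it below -/
import Mathlib

section
/- Let D be a DAG on nodes V = {1,...,d} with reachability relation An(i) (ancestors of i including i), and let B̄ = (b̄_{ij}) be a nonnegative d×d matrix with b̄_{ji} > 0 iff j ∈ An(i), and with each column summing to 1 (∑_{k∈An(i)} b̄_{ki} = 1). Assume for all i ∈ V, k ∈ an(i), j ∈ an(k) that b̄_{ji} ≥ b̄_{jk} b̄_{ki} / b̄_{kk}. Then for all distinct i, j ∈ V one has b̄_{jj} > b̄_{ji}. -/
/-!
If `j` is a strict ancestor of `i` and `b̄_{jj} ≤ b̄_{ji}`, the path inequality through `j`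
gives `b̄_{kj} ≤ b̄_{kj} b̄_{ji} / b̄_{jj} ≤ b̄_{ki}` for every `k ∈ An(j)`, so column `i`
already has mass at least `1` on `An(j)`. But `An(j) ⊆ An(i)` and, by acyclicity, `i ∉ An(j)`
while `b̄_{ii} > 0`, so column `i` would have total mass greater than `1`.
If `j` is not an ancestor of `i`, then `b̄_{ji} = 0 < b̄_{jj}`.
-/

open Finset
open scoped Classical

/-- `anc E j i`: there is a directed path (length ≥ 1) from `j` to `i`, i.e. `j` is a
strict ancestor of `i` in the directed graph with edge relation `E`. -/
def anc {d : ℕ} (E : Fin d → Fin d → Prop) (j i : Fin d) : Prop :=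
  Relation.TransGen E j i

/-- `Anc E j i`: `j` is an ancestor of `i`, including `j = i`. -/
def Anc {d : ℕ} (E : Fin d → Fin d → Prop) (j i : Fin d) : Prop :=
  j = i ∨ Relation.TransGen E j i

/-- The tail dependence coefficient associated to a (standardized) max-linear
coefficient matrix `B`: `χ(i,j) = ∑_{k ∈ An(i) ∩ An(j)} min (B k i) (B k j)`. -/
noncomputable def tdc {d : ℕ} (E : Fin d → Fin d → Prop)
    (B : Matrix (Fin d) (Fin d) ℝ) (i j : Fin d) : ℝ :=
  ∑ k ∈ Finset.univ.filter (fun k => Anc E k i ∧ Anc E k j), min (B k i) (B k j)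

section Ancestors

variable {d : ℕ} {E : Fin d → Fin d → Prop} {i j k : Fin d}

lemma Anc.anc_trans (hkj : Anc E k j) (hji : anc E j i) : anc E k i := by
  rcases hkj with rfl | hkj
  · exact hji
  · exact Relation.TransGen.trans hkj hji

lemma not_Anc_of_anc (hacyc : ∀ i, ¬ anc E i i) (hji : anc E j i) : ¬ Anc E i j :=
  fun hij => hacyc i (hij.anc_trans hji)

lemma filter_Anc_subset_of_anc (hji : anc E j i) :
    univ.filter (fun k => Anc E k j) ⊆ univ.filter (fun k => Anc E k i) := by
  intro k hk
  rw [mem_filter] at hk ⊢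
  exact ⟨mem_univ k, Or.inr (hk.2.anc_trans hji)⟩

end Ancestors

lemma le_of_Anc_of_diag_le {d : ℕ} {E : Fin d → Fin d → Prop} {B : Matrix (Fin d) (Fin d) ℝ}
    (hnn : ∀ j i, 0 ≤ B j i)
    (hineq : ∀ i k j, anc E k i → anc E j k → B j k * B k i / B k k ≤ B j i)
    {i j : Fin d} (hji : anc E j i) (hjj : 0 < B j j) (hle : B j j ≤ B j i)
    {k : Fin d} (hkj : Anc E k j) : B k j ≤ B k i := by
  rcases hkj with rfl | hkj
  · exact hle
  · calc B k j = B k j * 1 := (mul_one _).symm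
      _ ≤ B k j * (B j i / B j j) := by gcongr; exacts [hnn k j, (one_le_div hjj).2 hle]
      _ = B k j * B j i / B j j := (mul_div_assoc _ _ _).symm
      _ ≤ B k i := hineq i j k hji hkj

theorem stmt0 {d : ℕ} (E : Fin d → Fin d → Prop)
    (hacyc : ∀ i, ¬ anc E i i)
    (B : Matrix (Fin d) (Fin d) ℝ)
    (hnn : ∀ j i, 0 ≤ B j i)
    (hsgn : ∀ j i, 0 < B j i ↔ Anc E j i)
    (hcol : ∀ i, ∑ k ∈ Finset.univ.filter (fun k => Anc E k i), B k i = 1)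
    (hineq : ∀ i k j, anc E k i → anc E j k → B j k * B k i / B k k ≤ B j i) :
    ∀ i j, i ≠ j → B j i < B j j := by
  intro i j hne
  have hjj : 0 < B j j := (hsgn j j).2 (Or.inl rfl)
  by_cases hji : anc E j i
  · by_contra! hle
    have hdom : ∑ k ∈ univ.filter (fun k => Anc E k j), B k j
        ≤ ∑ k ∈ univ.filter (fun k => Anc E k j), B k i :=
      sum_le_sum fun k hk => le_of_Anc_of_diag_le hnn hineq hji hjj hle (mem_filter.1 hk).2
    have hstrict : ∑ k ∈ univ.filter (fun k => Anc E k j), B k i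
        < ∑ k ∈ univ.filter (fun k => Anc E k i), B k i :=
      sum_lt_sum_of_subset (filter_Anc_subset_of_anc hji) (mem_filter.2 ⟨mem_univ i, Or.inl rfl⟩)
        (by simpa using not_Anc_of_anc hacyc hji) ((hsgn i i).2 (Or.inl rfl))
        fun k _ _ => hnn k i
    linarith [hcol i, hcol j]
  · have hzero : ¬ 0 < B j i := fun h => ((hsgn j i).1 h).elim (fun h => hne h.symm) hji
    linarith [not_lt.1 hzero]
end

section
/- Let B̄ be a standardized max-linear coefficient matrix of a recursive max-linear model on a DAG D, and define χ(i,j) = ∑_{k ∈ An(i) ∩ An(j)} min(b̄_{ki}, b̄_{kj}). Then for i ∈ V and j ∈ an(i): χ(j,i) ≥ b̄_{ji}/b̄_{jj} > 0, and χ(i,j) ≤ ∑_{k ∈ An(j)} b̄_{ki} < 1. -/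
open Finset
open scoped Classical

theorem stmt1 {d : ℕ} (E : Fin d → Fin d → Prop)
    (hacyc : ∀ i, ¬ anc E i i)
    (B : Matrix (Fin d) (Fin d) ℝ)
    (hnn : ∀ j i, 0 ≤ B j i)
    (hsgn : ∀ j i, 0 < B j i ↔ Anc E j i)
    (hcol : ∀ i, ∑ k ∈ Finset.univ.filter (fun k => Anc E k i), B k i = 1)
    (hineq : ∀ i k j, anc E k i → anc E j k → B j k * B k i / B k k ≤ B j i) :
    ∀ i j, anc E j i →
      0 < B j i / B j j ∧ B j i / B j j ≤ tdc E B j i ∧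
      tdc E B i j ≤ ∑ k ∈ Finset.univ.filter (fun k => Anc E k j), B k i ∧
      (∑ k ∈ Finset.univ.filter (fun k => Anc E k j), B k i) < 1 := by
  intro i j hji
  have hAjj : Anc E j j := Or.inl rfl
  have hAji : Anc E j i := Or.inr hji
  have hBjj : 0 < B j j := (hsgn j j).2 hAjj
  have hBji : 0 < B j i := (hsgn j i).2 hAji
  have hBii : 0 < B i i := (hsgn i i).2 (Or.inl rfl)
  have hsub : ∀ k, Anc E k j → Anc E k i := by
    intro k hk
    rcases hk with rfl | hk
    · exact Or.inr hji
    · exact Or.inr (hk.trans hji)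
  set c := B j i / B j j with hc
  have hc0 : 0 < c := div_pos hBji hBjj
  -- key inequality: B k j * c ≤ B k i for ancestors k of j
  have hkey : ∀ k, Anc E k j → B k j * c ≤ B k i := by
    intro k hk
    rcases hk with rfl | hk
    · rw [hc, mul_div_cancel₀ _ (ne_of_gt hBjj)]
    · have h := hineq i j k hji hk
      rwa [mul_div_assoc] at h
  -- S := ∑_{k ∈ An(j)} B k i
  set S := ∑ k ∈ Finset.univ.filter (fun k => Anc E k j), B k i with hS
  have hsum_cj : ∑ k ∈ Finset.univ.filter (fun k => Anc E k j), B k j * c = c := by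
    rw [← Finset.sum_mul, hcol j, one_mul]
  have hcS : c ≤ S := by
    rw [← hsum_cj, hS]
    exact Finset.sum_le_sum (fun k hk => hkey k (Finset.mem_filter.1 hk).2)
  -- i is not an ancestor of j
  have hiAj : ¬ Anc E i j := by
    rintro (rfl | h)
    · exact hacyc i hji
    · exact hacyc i (h.trans hji)
  have hiNot : i ∉ Finset.univ.filter (fun k => Anc E k j) := by
    simp [hiAj]
  -- S < 1
  have hSlt : S < 1 := by
    have hins : insert i (Finset.univ.filter (fun k => Anc E k j)) ⊆
        Finset.univ.filter (fun k => Anc E k i) := by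
      intro k hk
      rcases Finset.mem_insert.1 hk with rfl | hk
      · exact Finset.mem_filter.2 ⟨Finset.mem_univ k, Or.inl rfl⟩
      · exact Finset.mem_filter.2 ⟨Finset.mem_univ k, hsub k (Finset.mem_filter.1 hk).2⟩
    have h1 : B i i + S ≤ ∑ k ∈ Finset.univ.filter (fun k => Anc E k i), B k i := by
      have h0 : ∑ k ∈ insert i (Finset.univ.filter (fun k => Anc E k j)), B k i ≤
          ∑ k ∈ Finset.univ.filter (fun k => Anc E k i), B k i :=
        Finset.sum_le_sum_of_subset_of_nonneg hins (fun k _ _ => hnn k i)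
      rwa [Finset.sum_insert hiNot] at h0
    rw [hcol i] at h1
    linarith
  have hc1 : c ≤ 1 := le_of_lt (lt_of_le_of_lt hcS hSlt)
  refine ⟨hc0, ?_, ?_, hSlt⟩
  · -- c ≤ tdc E B j i
    have hfilter : (Finset.univ.filter (fun k => Anc E k j ∧ Anc E k i)) =
        Finset.univ.filter (fun k => Anc E k j) := by
      apply Finset.filter_congr
      intro k _
      exact ⟨fun h => h.1, fun h => ⟨h, hsub k h⟩⟩
    rw [tdc, hfilter, ← hsum_cj]
    refine Finset.sum_le_sum (fun k hk => ?_)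
    have hkj := (Finset.mem_filter.1 hk).2
    refine le_min ?_ (hkey k hkj)
    calc B k j * c ≤ B k j * 1 := by
          exact mul_le_mul_of_nonneg_left hc1 (hnn k j)
      _ = B k j := mul_one _
  · -- tdc E B i j ≤ S
    rw [tdc, hS]
    calc ∑ k ∈ Finset.univ.filter (fun k => Anc E k i ∧ Anc E k j), min (B k i) (B k j)
        ≤ ∑ k ∈ Finset.univ.filter (fun k => Anc E k i ∧ Anc E k j), B k i :=
          Finset.sum_le_sum (fun k _ => min_le_left (B k i) (B k j))
      _ ≤ ∑ k ∈ Finset.univ.filter (fun k => Anc E k j), B k i := by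
          refine Finset.sum_le_sum_of_subset_of_nonneg ?_ (fun k _ _ => hnn k i)
          intro k hk
          exact Finset.mem_filter.2 ⟨Finset.mem_univ k, (Finset.mem_filter.1 hk).2.2⟩
end

section
/- Let B̄ be a standardized max-linear coefficient matrix on a DAG D with initial nodes V₀, and χ the associated tail dependence matrix. Then for any i ∈ V and any j ∈ V₀: χ(j,i) = b̄_{ji}. Moreover, for i ∈ V and j ∈ V₀, the set An(i) ∩ V₀ equals {k ∈ V₀ : χ(k,i) > 0}, and De(j) = {k ∈ V : χ(j,k) > 0}. -/
open Finset
open scoped Classical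

theorem stmt4 {d : ℕ} (E : Fin d → Fin d → Prop)
    (hacyc : ∀ i, ¬ anc E i i)
    (B : Matrix (Fin d) (Fin d) ℝ)
    (hnn : ∀ j i, 0 ≤ B j i)
    (hsgn : ∀ j i, 0 < B j i ↔ Anc E j i)
    (hcol : ∀ i, ∑ k ∈ Finset.univ.filter (fun k => Anc E k i), B k i = 1)
    (hdiag : ∀ i j, i ≠ j → B j i < B j j) :
    (∀ i j, (∀ k, ¬ E k j) → tdc E B j i = B j i) ∧
    (∀ i : Fin d, {k : Fin d | Anc E k i ∧ ∀ m, ¬ E m k}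
        = {k : Fin d | (∀ m, ¬ E m k) ∧ 0 < tdc E B k i}) ∧
    (∀ j : Fin d, (∀ k, ¬ E k j) →
      {k : Fin d | Anc E j k} = {k : Fin d | 0 < tdc E B j k}) := by
  -- If j is initial, the only ancestor of j is j itself.
  have hinit : ∀ j : Fin d, (∀ k, ¬ E k j) → ∀ k, Anc E k j ↔ k = j := by
    intro j hj k
    constructor
    · rintro (rfl | h)
      · rfl
      · cases h with
        | single h => exact absurd h (hj k)
        | tail _ h => exact absurd h (hj _)
    · rintro rfl; exact Or.inl rfl
  have h1 : ∀ i j, (∀ k, ¬ E k j) → tdc E B j i = B j i := by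
    intro i j hj
    unfold tdc
    by_cases hji : Anc E j i
    · have hset : Finset.univ.filter (fun k => Anc E k j ∧ Anc E k i) = {j} := by
        ext k
        simp only [Finset.mem_filter, Finset.mem_univ, true_and, Finset.mem_singleton]
        constructor
        · rintro ⟨hkj, _⟩; exact (hinit j hj k).mp hkj
        · rintro rfl; exact ⟨Or.inl rfl, hji⟩
      rw [hset, Finset.sum_singleton]
      by_cases hij : i = j
      · subst hij; simp
      · exact min_eq_right (le_of_lt (hdiag i j hij))
    · have hset : Finset.univ.filter (fun k => Anc E k j ∧ Anc E k i) = ∅ := by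
        ext k
        simp only [Finset.mem_filter, Finset.mem_univ, true_and, Finset.notMem_empty,
          iff_false, not_and]
        intro hkj
        rw [hinit j hj k] at hkj
        subst hkj
        exact hji
      rw [hset, Finset.sum_empty]
      have : ¬ 0 < B j i := fun h => hji ((hsgn j i).mp h)
      linarith [hnn j i]
  refine ⟨h1, ?_, ?_⟩
  · intro i
    ext k
    simp only [Set.mem_setOf_eq]
    constructor
    · rintro ⟨hki, hk⟩
      refine ⟨hk, ?_⟩
      rw [h1 i k hk]
      exact (hsgn k i).mpr hki
    · rintro ⟨hk, hpos⟩
      rw [h1 i k hk] at hpos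
      exact ⟨(hsgn k i).mp hpos, hk⟩
  · intro j hj
    ext k
    simp only [Set.mem_setOf_eq]
    rw [h1 k j hj, hsgn]
end

section
/- Let D be a DAG with initial node set V₀ and χ the tail dependence matrix of a recursive max-linear model on D. Let W ⊆ V be a maximum χ-clique, i.e., a set of maximum cardinality such that χ(i,j) = 0 for all distinct i,j ∈ W. Then there exists a unique bijection φ: V₀ → W such that for every j ∈ V₀, χ(j, φ(j)) > 0 and χ(j, i) = 0 for all i ∈ W \ {φ(j)}. Moreover, for each j ∈ V₀: An(φ(j)) ∩ V₀ = {j} and De(j) ∩ W = {φ(j)}; in particular if j ≠ φ(j) then D has a directed path from j to φ(j). -/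
open Finset
open scoped Classical

lemma anc_of_init {d : ℕ} {E : Fin d → Fin d → Prop} {j : Fin d}
    (hj : ∀ k, ¬ E k j) : ∀ k, Anc E k j → k = j := by
  intro k hk
  rcases hk with rfl | h
  · rfl
  · cases h with
    | single h => exact absurd h (hj k)
    | tail _ h => exact absurd h (hj _)

lemma Anc_trans {d : ℕ} {E : Fin d → Fin d → Prop} {a b c : Fin d}
    (h1 : Anc E a b) (h2 : Anc E b c) : Anc E a c := by
  rcases h1 with rfl | h1
  · exact h2
  · rcases h2 with rfl | h2
    · exact Or.inr h1
    · exact Or.inr (h1.trans h2)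

lemma tdc_pos {d : ℕ} {E : Fin d → Fin d → Prop} {B : Matrix (Fin d) (Fin d) ℝ}
    (hnn : ∀ j i, 0 ≤ B j i) (hsgn : ∀ j i, 0 < B j i ↔ Anc E j i)
    {i j : Fin d} (h : ∃ k, Anc E k i ∧ Anc E k j) : 0 < tdc E B i j := by
  obtain ⟨k, hk1, hk2⟩ := h
  refine Finset.sum_pos' (fun m _ => le_min (hnn m i) (hnn m j)) ⟨k, ?_, ?_⟩
  · simp [Finset.mem_filter, hk1, hk2]
  · exact lt_min ((hsgn k i).2 hk1) ((hsgn k j).2 hk2)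

lemma tdc_zero {d : ℕ} {E : Fin d → Fin d → Prop} {B : Matrix (Fin d) (Fin d) ℝ}
    {i j : Fin d} (h : ¬ ∃ k, Anc E k i ∧ Anc E k j) : tdc E B i j = 0 := by
  unfold tdc
  refine Finset.sum_eq_zero fun k hk => ?_
  simp only [Finset.mem_filter] at hk
  exact absurd ⟨k, hk.2⟩ h

lemma exists_common_of_tdc_pos {d : ℕ} {E : Fin d → Fin d → Prop}
    {B : Matrix (Fin d) (Fin d) ℝ} {i j : Fin d} (h : 0 < tdc E B i j) :
    ∃ k, Anc E k i ∧ Anc E k j := by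
  by_contra hc
  rw [tdc_zero hc] at h
  exact lt_irrefl 0 h

lemma exists_init_anc {d : ℕ} {E : Fin d → Fin d → Prop}
    (hacyc : ∀ i, ¬ anc E i i) :
    ∀ i : Fin d, ∃ j, (∀ k, ¬ E k j) ∧ Anc E j i := by
  haveI : IsTrans (Fin d) (Relation.TransGen E) := ⟨fun _ _ _ => Relation.TransGen.trans⟩
  haveI : IsIrrefl (Fin d) (Relation.TransGen E) := ⟨hacyc⟩
  have hwf : WellFounded (Relation.TransGen E) :=
    Finite.wellFounded_of_trans_of_irrefl _
  intro i
  induction i using hwf.induction with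
  | _ i ih =>
    by_cases h : ∀ k, ¬ E k i
    · exact ⟨i, h, Or.inl rfl⟩
    · push_neg at h
      obtain ⟨k, hk⟩ := h
      obtain ⟨j, hj, hji⟩ := ih k (Relation.TransGen.single hk)
      exact ⟨j, hj, Anc_trans hji (Or.inr (Relation.TransGen.single hk))⟩

theorem stmt5 {d : ℕ} (E : Fin d → Fin d → Prop)
    (hacyc : ∀ i, ¬ anc E i i)
    (B : Matrix (Fin d) (Fin d) ℝ)
    (hnn : ∀ j i, 0 ≤ B j i)
    (hsgn : ∀ j i, 0 < B j i ↔ Anc E j i)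
    (hcol : ∀ i, ∑ k ∈ Finset.univ.filter (fun k => Anc E k i), B k i = 1)
    (hdiag : ∀ i j, i ≠ j → B j i < B j j)
    (V0 : Finset (Fin d)) (hV0 : V0 = Finset.univ.filter (fun i => ∀ k, ¬ E k i))
    (W : Finset (Fin d))
    (hWzero : ∀ i ∈ W, ∀ j ∈ W, i ≠ j → tdc E B i j = 0)
    (hWmax : ∀ W' : Finset (Fin d),
      (∀ i ∈ W', ∀ j ∈ W', i ≠ j → tdc E B i j = 0) → W'.card ≤ W.card) :
    (∃! φ : {j // j ∈ V0} → {i // i ∈ W}, Function.Bijective φ ∧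
      ∀ j : {j // j ∈ V0}, 0 < tdc E B j.1 (φ j).1 ∧
        ∀ i ∈ W, i ≠ (φ j).1 → tdc E B j.1 i = 0) ∧
    (∀ φ : {j // j ∈ V0} → {i // i ∈ W}, (Function.Bijective φ ∧
      ∀ j : {j // j ∈ V0}, 0 < tdc E B j.1 (φ j).1 ∧
        ∀ i ∈ W, i ≠ (φ j).1 → tdc E B j.1 i = 0) →
      ∀ j : {j // j ∈ V0},
        ({k : Fin d | Anc E k (φ j).1} ∩ ↑V0 = {j.1}) ∧
        ({k : Fin d | Anc E j.1 k} ∩ ↑W = {(φ j).1}) ∧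
        (j.1 ≠ (φ j).1 → anc E j.1 (φ j).1)) := by
  have hmem : ∀ x : Fin d, x ∈ V0 ↔ ∀ k, ¬ E k x := by
    intro x; rw [hV0]; simp
  have hchoice : ∀ i : Fin d, ∃ j, (∀ k, ¬ E k j) ∧ Anc E j i := exists_init_anc hacyc
  set ψ : {i // i ∈ W} → {j // j ∈ V0} :=
    fun i => ⟨(hchoice i.1).choose, (hmem _).2 (hchoice i.1).choose_spec.1⟩ with hψ
  have hψanc : ∀ i : {i // i ∈ W}, Anc E (ψ i).1 i.1 := fun i => (hchoice i.1).choose_spec.2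
  have hψinj : Function.Injective ψ := by
    intro i1 i2 h
    by_contra hne
    have hne' : i1.1 ≠ i2.1 := fun h' => hne (Subtype.ext h')
    have h0 : tdc E B i1.1 i2.1 = 0 := hWzero _ i1.2 _ i2.2 hne'
    have hpos : 0 < tdc E B i1.1 i2.1 :=
      tdc_pos hnn hsgn ⟨(ψ i1).1, hψanc i1, by rw [h]; exact hψanc i2⟩
    linarith
  have hV0clique : ∀ i ∈ V0, ∀ j ∈ V0, i ≠ j → tdc E B i j = 0 := by
    intro i hi j hj hij
    refine tdc_zero ?_
    rintro ⟨k, hk1, hk2⟩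
    have e1 := anc_of_init ((hmem i).1 hi) k hk1
    have e2 := anc_of_init ((hmem j).1 hj) k hk2
    exact hij (e1 ▸ e2)
  have hcard1 : V0.card ≤ W.card := hWmax V0 hV0clique
  have hcard2 : Fintype.card {i // i ∈ W} = Fintype.card {j // j ∈ V0} := by
    have hle := Fintype.card_le_of_injective ψ hψinj
    simp only [Fintype.card_coe] at *
    omega
  have hψbij : Function.Bijective ψ :=
    (Fintype.bijective_iff_injective_and_card ψ).2 ⟨hψinj, hcard2⟩
  set e := Equiv.ofBijective ψ hψbij with he
  have hψφ : ∀ j, ψ (e.symm j) = j := fun j => e.apply_symm_apply j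
  have huniq : ∀ (i : {i // i ∈ W}) (k : Fin d), (∀ m, ¬ E m k) → Anc E k i.1 →
      k = (ψ i).1 := by
    intro i k hkin hki
    by_contra hne
    set i' := e.symm ⟨k, (hmem k).2 hkin⟩ with hi'
    have hψi' : (ψ i').1 = k := congrArg Subtype.val (hψφ ⟨k, (hmem k).2 hkin⟩)
    have hne2 : i'.1 ≠ i.1 := by
      intro h
      have : i' = i := Subtype.ext h
      rw [this] at hψi'
      exact hne hψi'.symm
    have h0 := hWzero _ i'.2 _ i.2 hne2
    have hpos : 0 < tdc E B i'.1 i.1 :=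
      tdc_pos hnn hsgn ⟨k, by rw [← hψi']; exact hψanc i', hki⟩
    linarith
  have hφ0prop : ∀ j : {j // j ∈ V0}, 0 < tdc E B j.1 (e.symm j).1 ∧
      ∀ i ∈ W, i ≠ (e.symm j).1 → tdc E B j.1 i = 0 := by
    intro j
    have hjanc : Anc E j.1 (e.symm j).1 := by
      have h := hψanc (e.symm j)
      rwa [hψφ j] at h
    refine ⟨tdc_pos hnn hsgn ⟨j.1, Or.inl rfl, hjanc⟩, ?_⟩
    intro i hi hne
    refine tdc_zero ?_
    rintro ⟨k, hk1, hk2⟩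
    have hkj : k = j.1 := anc_of_init ((hmem _).1 j.2) k hk1
    rw [hkj] at hk2
    have h1 : j.1 = (ψ ⟨i, hi⟩).1 := huniq ⟨i, hi⟩ j.1 ((hmem _).1 j.2) hk2
    have h2 : ψ ⟨i, hi⟩ = j := Subtype.ext h1.symm
    have h3 : e.symm j = ⟨i, hi⟩ := by
      rw [← h2]; exact e.symm_apply_apply _
    exact hne (congrArg Subtype.val h3).symm
  have hφuniq : ∀ φ' : {j // j ∈ V0} → {i // i ∈ W},
      (Function.Bijective φ' ∧
        ∀ j : {j // j ∈ V0}, 0 < tdc E B j.1 (φ' j).1 ∧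
          ∀ i ∈ W, i ≠ (φ' j).1 → tdc E B j.1 i = 0) → φ' = ⇑e.symm := by
    rintro φ' ⟨hb, hp⟩
    funext j
    obtain ⟨k, hk1, hk2⟩ := exists_common_of_tdc_pos (hp j).1
    have hkj : k = j.1 := anc_of_init ((hmem _).1 j.2) k hk1
    rw [hkj] at hk2
    have h1 : j.1 = (ψ (φ' j)).1 := huniq (φ' j) j.1 ((hmem _).1 j.2) hk2
    have h2 : ψ (φ' j) = j := Subtype.ext h1.symm
    calc φ' j = e.symm (e (φ' j)) := (e.symm_apply_apply _).symm
    _ = e.symm j := by rw [show e (φ' j) = j from h2]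
  constructor
  · exact ⟨⇑e.symm, ⟨e.symm.bijective, hφ0prop⟩, hφuniq⟩
  · rintro φ ⟨hbij, hprop⟩ j
    have hAnc : Anc E j.1 (φ j).1 := by
      obtain ⟨k, hk1, hk2⟩ := exists_common_of_tdc_pos (hprop j).1
      have hkj : k = j.1 := anc_of_init ((hmem _).1 j.2) k hk1
      rwa [hkj] at hk2
    refine ⟨?_, ?_, ?_⟩
    · ext k
      simp only [Set.mem_inter_iff, Set.mem_setOf_eq, Finset.mem_coe,
        Set.mem_singleton_iff]
      constructor
      · rintro ⟨hk1, hk2⟩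
        by_contra hne
        by_cases hcase : (φ j).1 = (φ ⟨k, hk2⟩).1
        · have h4 : φ j = φ ⟨k, hk2⟩ := Subtype.ext hcase
          have h5 := hbij.1 h4
          exact hne (congrArg Subtype.val h5).symm
        · have h0 := (hprop ⟨k, hk2⟩).2 (φ j).1 (φ j).2 hcase
          have hpos : 0 < tdc E B k (φ j).1 :=
            tdc_pos hnn hsgn ⟨k, Or.inl rfl, hk1⟩
          linarith
      · rintro rfl
        exact ⟨hAnc, j.2⟩
    · ext k
      simp only [Set.mem_inter_iff, Set.mem_setOf_eq, Finset.mem_coe,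
        Set.mem_singleton_iff]
      constructor
      · rintro ⟨hk1, hk2⟩
        by_contra hne
        have h0 := (hprop j).2 k hk2 hne
        have hpos : 0 < tdc E B j.1 k := tdc_pos hnn hsgn ⟨j.1, Or.inl rfl, hk1⟩
        linarith
      · rintro rfl
        exact ⟨hAnc, (φ j).2⟩
    · intro hne
      rcases hAnc with h | h
      · exact absurd h hne
      · exact h
end

section
/- Let χ be the tail dependence matrix of a recursive max-linear model on a DAG D, let W be a maximum χ-clique, and let i, j ∈ V \ W. If χ(i,j) < ∑_{k ∈ W} min(χ(k,i), χ(k,j)), then W is not the set of initial nodes of D. -/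
open Finset
open scoped Classical

theorem stmt6 {d : ℕ} (E : Fin d → Fin d → Prop)
    (hacyc : ∀ i, ¬ anc E i i)
    (B : Matrix (Fin d) (Fin d) ℝ)
    (hnn : ∀ j i, 0 ≤ B j i)
    (hsgn : ∀ j i, 0 < B j i ↔ Anc E j i)
    (hcol : ∀ i, ∑ k ∈ Finset.univ.filter (fun k => Anc E k i), B k i = 1)
    (hdiag : ∀ i j, i ≠ j → B j i < B j j)
    (W : Finset (Fin d))
    (hWzero : ∀ i ∈ W, ∀ j ∈ W, i ≠ j → tdc E B i j = 0)
    (hWmax : ∀ W' : Finset (Fin d),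
      (∀ i ∈ W', ∀ j ∈ W', i ≠ j → tdc E B i j = 0) → W'.card ≤ W.card)
    (i j : Fin d) (hi : i ∉ W) (hj : j ∉ W)
    (hlt : tdc E B i j < ∑ k ∈ W, min (tdc E B k i) (tdc E B k j)) :
    W ≠ Finset.univ.filter (fun i : Fin d => ∀ k, ¬ E k i) := by
  intro hW
  -- initial nodes have only themselves as ancestors
  have hinit : ∀ k ∈ W, ∀ m, Anc E m k ↔ m = k := by
    intro k hk m
    rw [hW, Finset.mem_filter] at hk
    constructor
    · rintro (rfl | h)
      · rfl
      · cases h with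
        | single h => exact absurd h (hk.2 _)
        | tail _ h => exact absurd h (hk.2 _)
    · rintro rfl; exact Or.inl rfl
  have hkey : ∀ k ∈ W, ∀ m, m ∉ W → tdc E B k m = B k m := by
    intro k hk m hm
    unfold tdc
    by_cases hA : Anc E k m
    · have hfilt : Finset.univ.filter (fun k' => Anc E k' k ∧ Anc E k' m) = {k} := by
        ext x
        simp only [Finset.mem_filter, Finset.mem_univ, true_and, Finset.mem_singleton]
        constructor
        · rintro ⟨h1, _⟩; exact (hinit k hk x).1 h1
        · rintro rfl; exact ⟨Or.inl rfl, hA⟩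
      rw [hfilt, Finset.sum_singleton]
      have hne : m ≠ k := fun h => hm (h ▸ hk)
      exact min_eq_right (le_of_lt (hdiag m k hne))
    · have hB : B k m = 0 := by
        have : ¬ 0 < B k m := fun h => hA ((hsgn k m).1 h)
        have := hnn k m; linarith
      have hfilt : Finset.univ.filter (fun k' => Anc E k' k ∧ Anc E k' m) = ∅ := by
        ext x
        simp only [Finset.mem_filter, Finset.mem_univ, true_and, Finset.notMem_empty,
          iff_false]
        rintro ⟨h1, h2⟩
        exact hA (((hinit k hk x).1 h1) ▸ h2)
      rw [hfilt, Finset.sum_empty, hB]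
  -- rewrite the sum over W
  have hsum : ∑ k ∈ W, min (tdc E B k i) (tdc E B k j)
      = ∑ k ∈ W, min (B k i) (B k j) := by
    apply Finset.sum_congr rfl
    intro k hk
    rw [hkey k hk i hi, hkey k hk j hj]
  set S := Finset.univ.filter (fun k => Anc E k i ∧ Anc E k j) with hS
  have hsub : ∑ k ∈ W, min (B k i) (B k j) = ∑ k ∈ W ∩ S, min (B k i) (B k j) := by
    symm
    apply Finset.sum_subset (Finset.inter_subset_left)
    intro x hx hx'
    have hxS : x ∉ S := fun h => hx' (Finset.mem_inter.2 ⟨hx, h⟩)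
    simp only [hS, Finset.mem_filter, Finset.mem_univ, true_and, not_and_or] at hxS
    rcases hxS with h | h
    · have : B x i = 0 := by
        have : ¬ 0 < B x i := fun hp => h ((hsgn x i).1 hp)
        have := hnn x i; linarith
      rw [this]
      exact le_antisymm (min_le_left _ _) (le_min le_rfl (hnn x j))
    · have : B x j = 0 := by
        have : ¬ 0 < B x j := fun hp => h ((hsgn x j).1 hp)
        have := hnn x j; linarith
      rw [this]
      exact le_antisymm (min_le_right _ _) (le_min (hnn x i) le_rfl)
  have hle : ∑ k ∈ W ∩ S, min (B k i) (B k j) ≤ tdc E B i j := by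
    unfold tdc
    rw [← hS]
    apply Finset.sum_le_sum_of_subset_of_nonneg (Finset.inter_subset_right)
    intro x _ _
    exact le_min (hnn x i) (hnn x j)
  rw [hsum, hsub] at hlt
  linarith
end

section
/- Let B̄ be the standardized max-linear coefficient matrix of a recursive max-weighted model on a DAG D, i.e., b̄_{ji} = b̄_{jk} b̄_{ki} / b̄_{kk} for all i ∈ V, k ∈ an(i), j ∈ an(k). Then for j ∈ An(i): χ(j,i) = b̄_{ji}/b̄_{jj} = ∑_{k∈An(j)} b̄_{ki}. -/
open Finset
open scoped Classical

theorem stmt8 {d : ℕ} (E : Fin d → Fin d → Prop)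
    (hacyc : ∀ i, ¬ anc E i i)
    (B : Matrix (Fin d) (Fin d) ℝ)
    (hnn : ∀ j i, 0 ≤ B j i)
    (hsgn : ∀ j i, 0 < B j i ↔ Anc E j i)
    (hcol : ∀ i, ∑ k ∈ Finset.univ.filter (fun k => Anc E k i), B k i = 1)
    (hmw : ∀ i k j, anc E k i → anc E j k → B j i = B j k * B k i / B k k) :
    ∀ i j, Anc E j i →
      tdc E B j i = B j i / B j j ∧
      B j i / B j j = ∑ k ∈ Finset.univ.filter (fun k => Anc E k j), B k i := by
  intro i j hji
  have hjj : 0 < B j j := (hsgn j j).mpr (Or.inl rfl)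
  rcases hji with rfl | hji
  · constructor
    · unfold tdc
      simp only [and_self, min_self]
      rw [hcol j, div_self hjj.ne']
    · rw [div_self hjj.ne', hcol j]
  · have hsub : ∀ k, Anc E k j → Anc E k i := by
      intro k hk
      rcases hk with rfl | h
      · exact Or.inr hji
      · exact Or.inr (h.trans hji)
    have hratio : ∀ k, Anc E k j → B k i = B k j * (B j i / B j j) := by
      intro k hk
      rcases hk with rfl | h
      · field_simp
      · rw [hmw i j k hji h]; ring
    have hsum : ∑ k ∈ Finset.univ.filter (fun k => Anc E k j), B k i
        = B j i / B j j := by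
      rw [Finset.sum_congr rfl (fun k hk => hratio k (by simpa using hk)),
        ← Finset.sum_mul, hcol j, one_mul]
    have hle1 : B j i / B j j ≤ 1 := by
      rw [← hsum, ← hcol i]
      apply Finset.sum_le_sum_of_subset_of_nonneg
      · intro k hk
        simp only [Finset.mem_filter, Finset.mem_univ, true_and] at hk ⊢
        exact hsub k hk
      · intros
        exact hnn _ _
    have hmin : ∀ k, Anc E k j → min (B k j) (B k i) = B k i := by
      intro k hk
      rw [min_eq_right]
      rw [hratio k hk]
      exact mul_le_of_le_one_right (hnn k j) hle1
    have htdc : tdc E B j i = B j i / B j j := by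
      unfold tdc
      have hfilt : (Finset.univ.filter fun k => Anc E k j ∧ Anc E k i)
          = Finset.univ.filter (fun k => Anc E k j) := by
        ext k
        simp only [Finset.mem_filter, Finset.mem_univ, true_and,
          and_iff_left_iff_imp]
        exact hsub k
      rw [hfilt, ← hsum]
      exact Finset.sum_congr rfl fun k hk => hmin k (by simpa using hk)
    exact ⟨htdc, hsum.symm⟩
end

section
/- Let χ be the tail dependence matrix of a recursive max-weighted model on a DAG D. Then for k ∈ an(i) and j ∈ an(k): χ(j,i) = χ(j,k)·χ(k,i) < min(χ(j,k), χ(k,i)). Consequently, for any directed path [j = k₀ → k₁ → ... → kₙ = i] in D, χ(j,i) = ∏_{ν=0}^{n-1} χ(k_ν, k_{ν+1}). -/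
/-!
For `j ∈ an(i)` the max-weighted identity `b̄_{ki} = b̄_{kj} b̄_{ji} / b̄_{jj}` (`k ∈ An(j)`) says
that on `An(j)` column `i` is column `j` scaled by `r = b̄_{ji} / b̄_{jj}`; as column `j` sums to
one, these entries of column `i` sum to `r`, and since column `i` also carries `b̄_{ii} > 0`,
`r < 1`. So every minimum in `χ(j,i)` is the column-`i` entry and `χ(j,i) = r`. The max-weighted
identity then reads `χ(j,i) = χ(j,k) χ(k,i)`, strictness follows from `0 < χ < 1`, and the path
formula by induction along the path.
-/

open Finset
open scoped Classical

variable {d : ℕ} {E : Fin d → Fin d → Prop} {B : Matrix (Fin d) (Fin d) ℝ}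

lemma Anc.trans {k j i : Fin d} (hkj : Anc E k j) (hji : Anc E j i) : Anc E k i := by
  rcases hkj with rfl | hkj
  · exact hji
  · rcases hji with rfl | hji
    · exact Or.inr hkj
    · exact Or.inr (hkj.trans hji)

lemma Anc.of_path {n : ℕ} {p : ℕ → Fin d} (hp : ∀ ν < n, E (p ν) (p (ν + 1))) :
    Anc E (p 0) (p n) := by
  induction n with
  | zero => exact Or.inl rfl
  | succ n ih =>
    exact (ih fun ν hν => hp ν (by omega)).trans (Or.inr (.single (hp n n.lt_succ_self)))

lemma tdc_self (hcol : ∀ i, ∑ k ∈ Finset.univ.filter (fun k => Anc E k i), B k i = 1)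
    (j : Fin d) : tdc E B j j = 1 := by
  simp only [tdc, and_self, min_self, hcol]

lemma mul_div_diag_of_Anc {j i : Fin d} (hjj : 0 < B j j)
    (hmw : ∀ i k j, anc E k i → anc E j k → B j i = B j k * B k i / B k k)
    (hji : anc E j i) {k : Fin d} (hkj : Anc E k j) : B k i = B k j * (B j i / B j j) := by
  rcases hkj with rfl | hkj
  · field_simp
  · rw [hmw i j k hji hkj, mul_div_assoc]

lemma sum_Anc_col_eq_div {j i : Fin d} (hjj : 0 < B j j)
    (hcol : ∀ i, ∑ k ∈ Finset.univ.filter (fun k => Anc E k i), B k i = 1)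
    (hmw : ∀ i k j, anc E k i → anc E j k → B j i = B j k * B k i / B k k)
    (hji : anc E j i) :
    ∑ k ∈ Finset.univ.filter (fun k => Anc E k j), B k i = B j i / B j j := by
  rw [sum_congr rfl fun k hk => mul_div_diag_of_Anc hjj hmw hji (mem_filter.mp hk).2,
    ← sum_mul, hcol j, one_mul]

structure IsStdMaxWeighted (E : Fin d → Fin d → Prop) (B : Matrix (Fin d) (Fin d) ℝ) :
    Prop where
  acyclic : ∀ i, ¬ anc E i i
  pos_iff : ∀ j i, 0 < B j i ↔ Anc E j i
  col_sum : ∀ i, ∑ k ∈ Finset.univ.filter (fun k => Anc E k i), B k i = 1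
  max_weighted : ∀ i k j, anc E k i → anc E j k → B j i = B j k * B k i / B k k

namespace IsStdMaxWeighted

variable {j k i : Fin d}

lemma diag_pos (hB : IsStdMaxWeighted E B) (j : Fin d) : 0 < B j j :=
  (hB.pos_iff j j).2 (Or.inl rfl)

lemma div_diag_lt_one (hB : IsStdMaxWeighted E B) (hji : anc E j i) : B j i / B j j < 1 := by
  have hi_notMem : i ∉ Finset.univ.filter (fun k => Anc E k j) := by
    simp only [mem_filter, mem_univ, true_and]
    rintro (rfl | hij)
    · exact hB.acyclic i hji
    · exact hB.acyclic i (hij.trans hji)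
  have hsub : insert i (Finset.univ.filter (fun k => Anc E k j)) ⊆
      Finset.univ.filter (fun k => Anc E k i) := by
    intro k hk
    simp only [mem_insert, mem_filter, mem_univ, true_and] at hk ⊢
    rcases hk with rfl | hkj
    · exact Or.inl rfl
    · exact hkj.trans (Or.inr hji)
  have hle : B i i + B j i / B j j ≤ 1 := by
    have := sum_le_sum_of_subset_of_nonneg hsub fun k hk _ =>
      ((hB.pos_iff k i).2 (mem_filter.mp hk).2).le
    rwa [sum_insert hi_notMem, sum_Anc_col_eq_div (hB.diag_pos j) hB.col_sum hB.max_weighted hji,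
      hB.col_sum i] at this
  linarith [hB.diag_pos i]

lemma tdc_eq_div (hB : IsStdMaxWeighted E B) (hji : anc E j i) :
    tdc E B j i = B j i / B j j := by
  have hcommon : Finset.univ.filter (fun k => Anc E k j ∧ Anc E k i) =
      Finset.univ.filter (fun k => Anc E k j) :=
    filter_congr fun k _ => ⟨And.left, fun hkj => ⟨hkj, hkj.trans (Or.inr hji)⟩⟩
  rw [tdc, hcommon, ← sum_Anc_col_eq_div (hB.diag_pos j) hB.col_sum hB.max_weighted hji]
  refine sum_congr rfl fun k hk => ?_
  have hkj := (mem_filter.mp hk).2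
  rw [mul_div_diag_of_Anc (hB.diag_pos j) hB.max_weighted hji hkj, min_eq_right]
  exact mul_le_of_le_one_right ((hB.pos_iff k j).2 hkj).le (hB.div_diag_lt_one hji).le

lemma tdc_pos (hB : IsStdMaxWeighted E B) (hji : anc E j i) : 0 < tdc E B j i := by
  rw [hB.tdc_eq_div hji]
  exact div_pos ((hB.pos_iff j i).2 (Or.inr hji)) (hB.diag_pos j)

lemma tdc_lt_one (hB : IsStdMaxWeighted E B) (hji : anc E j i) : tdc E B j i < 1 := by
  rw [hB.tdc_eq_div hji]
  exact hB.div_diag_lt_one hji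

lemma tdc_eq_mul (hB : IsStdMaxWeighted E B) (hki : anc E k i) (hjk : Anc E j k) :
    tdc E B j i = tdc E B j k * tdc E B k i := by
  rcases hjk with rfl | hjk
  · rw [tdc_self hB.col_sum, one_mul]
  have hjj := hB.diag_pos j
  have hkk := hB.diag_pos k
  rw [hB.tdc_eq_div (hjk.trans hki), hB.tdc_eq_div hjk, hB.tdc_eq_div hki,
    hB.max_weighted i k j hki hjk]
  field_simp

lemma tdc_lt_min (hB : IsStdMaxWeighted E B) (hki : anc E k i) (hjk : anc E j k) :
    tdc E B j i < min (tdc E B j k) (tdc E B k i) := by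
  rw [hB.tdc_eq_mul hki (Or.inr hjk), lt_min_iff]
  exact ⟨mul_lt_of_lt_one_right (hB.tdc_pos hjk) (hB.tdc_lt_one hki),
    mul_lt_of_lt_one_left (hB.tdc_pos hki) (hB.tdc_lt_one hjk)⟩

lemma tdc_path_eq_prod (hB : IsStdMaxWeighted E B) {n : ℕ} {p : ℕ → Fin d}
    (hp : ∀ ν < n, E (p ν) (p (ν + 1))) :
    tdc E B (p 0) (p n) = ∏ ν ∈ range n, tdc E B (p ν) (p (ν + 1)) := by
  induction n with
  | zero => simp [tdc_self hB.col_sum]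
  | succ n ih =>
    have hp' : ∀ ν < n, E (p ν) (p (ν + 1)) := fun ν hν => hp ν (by omega)
    rw [prod_range_succ, ← ih hp',
      hB.tdc_eq_mul (.single (hp n n.lt_succ_self)) (Anc.of_path hp')]

end IsStdMaxWeighted

theorem stmt9_general {d : ℕ} (E : Fin d → Fin d → Prop)
    (hacyc : ∀ i, ¬ anc E i i)
    (B : Matrix (Fin d) (Fin d) ℝ)
    (hsgn : ∀ j i, 0 < B j i ↔ Anc E j i)
    (hcol : ∀ i, ∑ k ∈ Finset.univ.filter (fun k => Anc E k i), B k i = 1)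
    (hmw : ∀ i k j, anc E k i → anc E j k → B j i = B j k * B k i / B k k) :
    (∀ i k j, anc E k i → anc E j k →
      tdc E B j i = tdc E B j k * tdc E B k i ∧
      tdc E B j i < min (tdc E B j k) (tdc E B k i)) ∧
    (∀ (n : ℕ) (p : ℕ → Fin d), (∀ ν < n, E (p ν) (p (ν + 1))) →
      tdc E B (p 0) (p n) = ∏ ν ∈ Finset.range n, tdc E B (p ν) (p (ν + 1))) := by
  have hB : IsStdMaxWeighted E B := ⟨hacyc, hsgn, hcol, hmw⟩
  exact ⟨fun _ _ _ hki hjk => ⟨hB.tdc_eq_mul hki (Or.inr hjk), hB.tdc_lt_min hki hjk⟩,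
    fun _ _ hp => hB.tdc_path_eq_prod hp⟩

theorem stmt9 {d : ℕ} (E : Fin d → Fin d → Prop)
    (hacyc : ∀ i, ¬ anc E i i)
    (B : Matrix (Fin d) (Fin d) ℝ)
    (hnn : ∀ j i, 0 ≤ B j i)
    (hsgn : ∀ j i, 0 < B j i ↔ Anc E j i)
    (hcol : ∀ i, ∑ k ∈ Finset.univ.filter (fun k => Anc E k i), B k i = 1)
    (hmw : ∀ i k j, anc E k i → anc E j k → B j i = B j k * B k i / B k k) :
    (∀ i k j, anc E k i → anc E j k →
      tdc E B j i = tdc E B j k * tdc E B k i ∧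
      tdc E B j i < min (tdc E B j k) (tdc E B k i)) ∧
    (∀ (n : ℕ) (p : ℕ → Fin d), (∀ ν < n, E (p ν) (p (ν + 1))) →
      tdc E B (p 0) (p n) = ∏ ν ∈ Finset.range n, tdc E B (p ν) (p (ν + 1))) :=
  stmt9_general E hacyc B hsgn hcol hmw
end

section
/- Let χ be the tail dependence matrix of a recursive max-weighted model on a DAG D. For i, j ∈ V, define μ_{ij,k} for k ∈ An(i) ∩ An(j) recursively by μ_{ij,k} = 1 − ∑_{ℓ ∈ de(k) ∩ An(i) ∩ An(j)} μ_{ij,ℓ}. Then χ(i,j) = ∑_{k ∈ An(i) ∩ An(j)} μ_{ij,k} · min(χ(k,i), χ(k,j)). -/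
open Finset
open scoped Classical

lemma B_fact {d : ℕ} {E : Fin d → Fin d → Prop} {B : Matrix (Fin d) (Fin d) ℝ}
    (hsgn : ∀ j i, 0 < B j i ↔ Anc E j i)
    (hmw : ∀ i k j, anc E k i → anc E j k → B j i = B j k * B k i / B k k)
    {k i : Fin d} (hk : Anc E k i) :
    ∀ ℓ, Anc E ℓ k → B ℓ i = B ℓ k * (B k i / B k k) := by
  intro ℓ hℓ
  have hkk : (0:ℝ) < B k k := (hsgn k k).2 (Or.inl rfl)
  rcases hℓ with rfl | hℓ
  · field_simp
  rcases hk with rfl | hk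
  · rw [div_self hkk.ne', mul_one]
  · rw [hmw i k ℓ hk hℓ]; ring

lemma tdc_anc {d : ℕ} {E : Fin d → Fin d → Prop} {B : Matrix (Fin d) (Fin d) ℝ}
    (hnn : ∀ j i, 0 ≤ B j i)
    (hsgn : ∀ j i, 0 < B j i ↔ Anc E j i)
    (hcol : ∀ i, ∑ k ∈ Finset.univ.filter (fun k => Anc E k i), B k i = 1)
    (hmw : ∀ i k j, anc E k i → anc E j k → B j i = B j k * B k i / B k k)
    {k i : Fin d} (hk : Anc E k i) :
    tdc E B k i = B k i / B k k ∧ B k i / B k k ≤ 1 := by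
  have hkk : (0:ℝ) < B k k := (hsgn k k).2 (Or.inl rfl)
  have hB := B_fact hsgn hmw hk
  have hsum : ∑ ℓ ∈ Finset.univ.filter (fun ℓ => Anc E ℓ k), B ℓ i
      = B k i / B k k := by
    calc ∑ ℓ ∈ Finset.univ.filter (fun ℓ => Anc E ℓ k), B ℓ i
        = ∑ ℓ ∈ Finset.univ.filter (fun ℓ => Anc E ℓ k), B ℓ k * (B k i / B k k) :=
          Finset.sum_congr rfl (fun ℓ hℓ => hB ℓ (by simpa using hℓ))
      _ = (∑ ℓ ∈ Finset.univ.filter (fun ℓ => Anc E ℓ k), B ℓ k) * (B k i / B k k) := by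
          rw [Finset.sum_mul]
      _ = B k i / B k k := by rw [hcol k, one_mul]
  have hle : B k i / B k k ≤ 1 := by
    rw [← hsum, ← hcol i]
    apply Finset.sum_le_sum_of_subset_of_nonneg
    · intro ℓ hℓ
      simp only [mem_filter, mem_univ, true_and] at *
      exact Anc_trans hℓ hk
    · intro ℓ _ _; exact hnn ℓ i
  refine ⟨?_, hle⟩
  unfold tdc
  have hset : Finset.univ.filter (fun ℓ => Anc E ℓ k ∧ Anc E ℓ i)
      = Finset.univ.filter (fun ℓ => Anc E ℓ k) := by
    ext ℓ; simp only [mem_filter, mem_univ, true_and]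
    exact ⟨fun h => h.1, fun h => ⟨h, Anc_trans h hk⟩⟩
  rw [hset, ← hsum]
  refine Finset.sum_congr rfl (fun ℓ hℓ => ?_)
  simp only [mem_filter, mem_univ, true_and] at hℓ
  rw [hB ℓ hℓ, min_eq_right (mul_le_of_le_one_right (hnn ℓ k) hle)]

lemma min_tdc {d : ℕ} {E : Fin d → Fin d → Prop} {B : Matrix (Fin d) (Fin d) ℝ}
    (hnn : ∀ j i, 0 ≤ B j i)
    (hsgn : ∀ j i, 0 < B j i ↔ Anc E j i)
    (hcol : ∀ i, ∑ k ∈ Finset.univ.filter (fun k => Anc E k i), B k i = 1)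
    (hmw : ∀ i k j, anc E k i → anc E j k → B j i = B j k * B k i / B k k)
    {k i j : Fin d} (hki : Anc E k i) (hkj : Anc E k j) :
    min (tdc E B k i) (tdc E B k j)
      = ∑ ℓ ∈ Finset.univ.filter (fun ℓ => Anc E ℓ k), min (B ℓ i) (B ℓ j) := by
  obtain ⟨hti, _⟩ := tdc_anc hnn hsgn hcol hmw hki
  obtain ⟨htj, _⟩ := tdc_anc hnn hsgn hcol hmw hkj
  rw [hti, htj]
  have hterm : ∀ ℓ ∈ Finset.univ.filter (fun ℓ => Anc E ℓ k),
      min (B ℓ i) (B ℓ j) = B ℓ k * min (B k i / B k k) (B k j / B k k) := by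
    intro ℓ hℓ
    simp only [mem_filter, mem_univ, true_and] at hℓ
    rw [B_fact hsgn hmw hki ℓ hℓ, B_fact hsgn hmw hkj ℓ hℓ]
    exact (mul_min_of_nonneg _ _ (hnn ℓ k)).symm
  rw [Finset.sum_congr rfl hterm, ← Finset.sum_mul, hcol k, one_mul]

theorem stmt12 {d : ℕ} (E : Fin d → Fin d → Prop)
    (hacyc : ∀ i, ¬ anc E i i)
    (B : Matrix (Fin d) (Fin d) ℝ)
    (hnn : ∀ j i, 0 ≤ B j i)
    (hsgn : ∀ j i, 0 < B j i ↔ Anc E j i)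
    (hcol : ∀ i, ∑ k ∈ Finset.univ.filter (fun k => Anc E k i), B k i = 1)
    (hmw : ∀ i k j, anc E k i → anc E j k → B j i = B j k * B k i / B k k) :
    ∀ i j : Fin d, ∀ mu : Fin d → ℝ,
      (∀ k, Anc E k i → Anc E k j → mu k =
        1 - ∑ ℓ ∈ Finset.univ.filter
          (fun ℓ => anc E k ℓ ∧ Anc E ℓ i ∧ Anc E ℓ j), mu ℓ) →
      tdc E B i j = ∑ k ∈ Finset.univ.filter (fun k => Anc E k i ∧ Anc E k j),
        mu k * min (tdc E B k i) (tdc E B k j) := by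
  intro i j mu hmu
  have key : ∀ k ∈ Finset.univ.filter (fun k => Anc E k i ∧ Anc E k j),
      mu k * min (tdc E B k i) (tdc E B k j)
        = ∑ ℓ ∈ Finset.univ.filter (fun ℓ => Anc E ℓ i ∧ Anc E ℓ j),
            (if Anc E ℓ k then mu k * min (B ℓ i) (B ℓ j) else 0) := by
    intro k hk
    simp only [mem_filter, mem_univ, true_and] at hk
    rw [min_tdc hnn hsgn hcol hmw hk.1 hk.2, Finset.mul_sum,
      Finset.sum_filter, Finset.sum_filter]
    refine Finset.sum_congr rfl (fun ℓ _ => ?_)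
    by_cases h : Anc E ℓ k
    · have h1 : Anc E ℓ i := Anc_trans h hk.1
      have h2 : Anc E ℓ j := Anc_trans h hk.2
      simp [h, h1, h2]
    · simp [h]
  rw [Finset.sum_congr rfl key, Finset.sum_comm]
  have inner : ∀ ℓ ∈ Finset.univ.filter (fun ℓ => Anc E ℓ i ∧ Anc E ℓ j),
      ∑ k ∈ Finset.univ.filter (fun k => Anc E k i ∧ Anc E k j),
        (if Anc E ℓ k then mu k * min (B ℓ i) (B ℓ j) else 0)
      = min (B ℓ i) (B ℓ j) := by
    intro ℓ hℓ
    simp only [mem_filter, mem_univ, true_and] at hℓ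
    rw [← Finset.sum_filter, Finset.filter_filter, ← Finset.sum_mul]
    have hset : Finset.univ.filter (fun k => (Anc E k i ∧ Anc E k j) ∧ Anc E ℓ k)
        = insert ℓ (Finset.univ.filter
            (fun k => anc E ℓ k ∧ Anc E k i ∧ Anc E k j)) := by
      ext k
      simp only [mem_filter, mem_univ, true_and, mem_insert]
      constructor
      · rintro ⟨⟨h1, h2⟩, (rfl | h3)⟩
        · exact Or.inl rfl
        · exact Or.inr ⟨h3, h1, h2⟩
      · rintro (rfl | ⟨h3, h1, h2⟩)
        · exact ⟨⟨hℓ.1, hℓ.2⟩, Or.inl rfl⟩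
        · exact ⟨⟨h1, h2⟩, Or.inr h3⟩
    have hℓnot : ℓ ∉ Finset.univ.filter
        (fun k => anc E ℓ k ∧ Anc E k i ∧ Anc E k j) := by
      simp only [mem_filter, mem_univ, true_and, not_and]
      intro h; exact absurd h (hacyc ℓ)
    rw [hset, Finset.sum_insert hℓnot]
    have := hmu ℓ hℓ.1 hℓ.2
    have h1 : mu ℓ + ∑ k ∈ Finset.univ.filter
        (fun k => anc E ℓ k ∧ Anc E k i ∧ Anc E k j), mu k = 1 := by linarith
    rw [h1, one_mul]
  rw [Finset.sum_congr rfl inner]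
  rfl
end

section
/- Let B̄ and B̃ be standardized max-linear coefficient matrices of recursive max-weighted models on DAGs D and D̃ on the same node set V, with the same tail dependence matrix χ. Let V₀, Ṽ₀ be the initial nodes of D, D̃ and V∞ the terminal nodes (no children) of D, and let φ: V₀ → Ṽ₀ be the unique bijection with χ(j, φ(j)) > 0 and χ(j, j̃) = 0 for j̃ ∈ Ṽ₀ \ {φ(j)}. Then for every j ∈ V₀ with j ≠ φ(j), φ(j) is a terminal node of D; in particular Ṽ₀ ⊆ (V₀ ∩ Ṽ₀) ∪ V∞. -/
open Finset
open scoped Classical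

section Aux

variable {d : ℕ} {E : Fin d → Fin d → Prop} {B : Matrix (Fin d) (Fin d) ℝ}

lemma anc_refl (i : Fin d) : Anc E i i := Or.inl rfl

lemma anc_trans' {a b c : Fin d} (h1 : Anc E a b) (h2 : Anc E b c) : Anc E a c := by
  rcases h1 with rfl | h1
  · exact h2
  rcases h2 with rfl | h2
  · exact Or.inr h1
  · exact Or.inr (h1.trans h2)

lemma initial_anc {j : Fin d} (h : ∀ k, ¬ E k j) {k : Fin d} (hk : Anc E k j) : k = j := by
  rcases hk with rfl | hk
  · rfl
  · cases hk with
    | single h' => exact absurd h' (h k)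
    | tail _ h' => exact absurd h' (h _)

lemma initial_filter (j : Fin d) (h : ∀ k, ¬ E k j) :
    Finset.univ.filter (fun k => Anc E k j) = {j} := by
  ext k
  simp only [Finset.mem_filter, Finset.mem_univ, true_and, Finset.mem_singleton]
  exact ⟨fun hk => initial_anc h hk, fun hk => hk ▸ Or.inl rfl⟩

lemma tdc_pos_elim {i j : Fin d} (h : 0 < tdc E B i j) :
    ∃ k, Anc E k i ∧ Anc E k j ∧ 0 < B k i ∧ 0 < B k j := by
  unfold tdc at h
  have h0 : ∑ _k ∈ Finset.univ.filter (fun k => Anc E k i ∧ Anc E k j), (0:ℝ)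
      < ∑ k ∈ Finset.univ.filter (fun k => Anc E k i ∧ Anc E k j), min (B k i) (B k j) := by
    simpa using h
  obtain ⟨k, hk, hk'⟩ := Finset.exists_lt_of_sum_lt h0
  simp only [Finset.mem_filter, Finset.mem_univ, true_and] at hk
  exact ⟨k, hk.1, hk.2, (lt_min_iff.mp hk').1, (lt_min_iff.mp hk').2⟩

lemma tdc_initial {i j : Fin d} (hinit : ∀ k, ¬ E k j) (hA : Anc E j i) :
    tdc E B j i = min (B j j) (B j i) := by
  unfold tdc
  have hfil : Finset.univ.filter (fun k => Anc E k j ∧ Anc E k i) = {j} := by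
    ext k
    simp only [Finset.mem_filter, Finset.mem_univ, true_and, Finset.mem_singleton]
    constructor
    · rintro ⟨h1, _⟩; exact initial_anc hinit h1
    · rintro rfl; exact ⟨Or.inl rfl, hA⟩
  rw [hfil, Finset.sum_singleton]

lemma tdc_comm (i j : Fin d) : tdc E B i j = tdc E B j i := by
  unfold tdc
  have hfil : Finset.univ.filter (fun k => Anc E k i ∧ Anc E k j)
      = Finset.univ.filter (fun k => Anc E k j ∧ Anc E k i) := by
    ext k; simp [and_comm]
  rw [hfil]
  exact Finset.sum_congr rfl (fun k _ => min_comm _ _)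

lemma two_le {i k k' : Fin d} (hnn : ∀ a b, 0 ≤ B a b)
    (hcol : ∑ m ∈ Finset.univ.filter (fun m => Anc E m i), B m i = 1)
    (hk : Anc E k i) (hk' : Anc E k' i) (hne : k ≠ k') :
    B k i + B k' i ≤ 1 := by
  have hsub : ({k, k'} : Finset (Fin d)) ⊆ Finset.univ.filter (fun m => Anc E m i) := by
    intro m hm
    simp only [Finset.mem_insert, Finset.mem_singleton] at hm
    rcases hm with rfl | rfl <;> simp [hk, hk']
  calc B k i + B k' i = ∑ m ∈ ({k, k'} : Finset (Fin d)), B m i := (Finset.sum_pair (f := fun m => B m i) hne).symm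
    _ ≤ ∑ m ∈ Finset.univ.filter (fun m => Anc E m i), B m i :=
        Finset.sum_le_sum_of_subset_of_nonneg hsub (fun m _ _ => hnn m i)
    _ = 1 := hcol

/-- In a max-weighted model, for a strict ancestor `jt` of `i`,
`χ(jt, i) = min 1 (B jt i / B jt jt)`. -/
lemma tdc_mid {jt i : Fin d}
    (hsgn : ∀ a b, 0 < B a b ↔ Anc E a b)
    (hcol : ∑ m ∈ Finset.univ.filter (fun m => Anc E m jt), B m jt = 1)
    (hmw : ∀ i k j, anc E k i → anc E j k → B j i = B j k * B k i / B k k)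
    (hA : anc E jt i) :
    tdc E B jt i = min 1 (B jt i / B jt jt) := by
  have hjj : 0 < B jt jt := (hsgn jt jt).2 (Or.inl rfl)
  set t := B jt i / B jt jt with ht
  unfold tdc
  have hfil : Finset.univ.filter (fun k => Anc E k jt ∧ Anc E k i) =
      Finset.univ.filter (fun k => Anc E k jt) := by
    ext k
    simp only [Finset.mem_filter, Finset.mem_univ, true_and, and_iff_left_iff_imp]
    intro hk; exact anc_trans' hk (Or.inr hA)
  rw [hfil]
  have hterm : ∀ k ∈ Finset.univ.filter (fun k => Anc E k jt),
      min (B k jt) (B k i) = B k jt * min 1 t := by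
    intro k hk
    simp only [Finset.mem_filter, Finset.mem_univ, true_and] at hk
    have hkpos : 0 < B k jt := (hsgn k jt).2 hk
    have hki : B k i = B k jt * t := by
      rcases hk with rfl | hk2
      · rw [ht]; field_simp
      · rw [hmw i jt k hA hk2, ht]; ring
    rw [hki]
    rcases le_total (1:ℝ) t with h | h
    · rw [min_eq_left h, mul_one, min_eq_left]
      nlinarith
    · rw [min_eq_right h, min_eq_right]
      nlinarith
  rw [Finset.sum_congr rfl hterm, ← Finset.sum_mul, hcol, one_mul]

end Aux

theorem stmt16 {d : ℕ} (E Et : Fin d → Fin d → Prop)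
    (hacyc : ∀ i, ¬ anc E i i) (hacyct : ∀ i, ¬ anc Et i i)
    (B Bt : Matrix (Fin d) (Fin d) ℝ)
    (hnn : ∀ j i, 0 ≤ B j i) (hnnt : ∀ j i, 0 ≤ Bt j i)
    (hsgn : ∀ j i, 0 < B j i ↔ Anc E j i)
    (hsgnt : ∀ j i, 0 < Bt j i ↔ Anc Et j i)
    (hcol : ∀ i, ∑ k ∈ Finset.univ.filter (fun k => Anc E k i), B k i = 1)
    (hcolt : ∀ i, ∑ k ∈ Finset.univ.filter (fun k => Anc Et k i), Bt k i = 1)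
    (hmw : ∀ i k j, anc E k i → anc E j k → B j i = B j k * B k i / B k k)
    (hmwt : ∀ i k j, anc Et k i → anc Et j k → Bt j i = Bt j k * Bt k i / Bt k k)
    (hchieq : ∀ i j, tdc E B i j = tdc Et Bt i j)
    (φ : Fin d → Fin d)
    (hbij : Set.BijOn φ {i | ∀ k, ¬ E k i} {i | ∀ k, ¬ Et k i})
    (hφ : ∀ j, (∀ k, ¬ E k j) → 0 < tdc E B j (φ j) ∧
      ∀ jt, (∀ k, ¬ Et k jt) → jt ≠ φ j → tdc E B j jt = 0) :
    (∀ j, (∀ k, ¬ E k j) → j ≠ φ j → ∀ k, ¬ E (φ j) k) ∧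
    ({i : Fin d | ∀ k, ¬ Et k i} ⊆
      ({i : Fin d | ∀ k, ¬ E k i} ∩ {i : Fin d | ∀ k, ¬ Et k i}) ∪
        {i : Fin d | ∀ k, ¬ E i k}) := by
  have key : ∀ j, (∀ k, ¬ E k j) → j ≠ φ j → ∀ i, ¬ E (φ j) i := by
    intro j hjinit hne i hEi
    have hjtinit : ∀ k, ¬ Et k (φ j) := hbij.mapsTo hjinit
    -- initial diagonal entries are 1
    have hBjj : B j j = 1 := by
      have h := hcol j; rwa [initial_filter j hjinit, Finset.sum_singleton] at h
    have hBtjtjt : Bt (φ j) (φ j) = 1 := by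
      have h := hcolt (φ j); rwa [initial_filter (φ j) hjtinit, Finset.sum_singleton] at h
    -- χ(j, φ j) > 0 gives a path j → φ j in D
    obtain ⟨hpos, -⟩ := hφ j hjinit
    have hAjjt : anc E j (φ j) := by
      obtain ⟨k, hk1, hk2, -, -⟩ := tdc_pos_elim hpos
      have hkj := initial_anc hjinit hk1
      subst hkj
      rcases hk2 with h | h
      · exact absurd h hne
      · exact h
    -- and a path φ j → j in D̃
    have hpost : 0 < tdc Et Bt j (φ j) := (hchieq j (φ j)) ▸ hpos
    have hAtjtj : anc Et (φ j) j := by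
      obtain ⟨k, hk1, hk2, -, -⟩ := tdc_pos_elim hpost
      have hkjt := initial_anc hjtinit hk2
      subst hkjt
      rcases hk1 with h | h
      · exact absurd h.symm hne
      · exact h
    set a := B j (φ j) with ha
    have hapos : 0 < a := (hsgn j (φ j)).2 (Or.inr hAjjt)
    have halt : a < 1 := by
      have h2 := two_le (B := B) hnn (hcol (φ j)) (Or.inr hAjjt) (anc_refl (φ j)) hne
      have hdpos : 0 < B (φ j) (φ j) := (hsgn (φ j) (φ j)).2 (Or.inl rfl)
      linarith
    -- χ(j, φ j) computed in both DAGs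
    have hchi1 : tdc E B j (φ j) = a := by
      rw [tdc_initial hjinit (Or.inr hAjjt), hBjj]
      exact min_eq_right halt.le
    have hchi1t : tdc Et Bt j (φ j) = Bt (φ j) j := by
      rw [tdc_comm, tdc_initial hjtinit (Or.inr hAtjtj), hBtjtjt]
      have h2 := two_le (B := Bt) hnnt (hcolt j) (Or.inr hAtjtj) (anc_refl j)
        (fun h => hne h.symm)
      have hdpos : 0 < Bt j j := (hsgnt j j).2 (Or.inl rfl)
      exact min_eq_right (by linarith)
    have haeq : Bt (φ j) j = a := by
      rw [← hchi1t, ← hchieq, hchi1]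
    -- the descendant i of φ j in D
    have hAjti : anc E (φ j) i := Relation.TransGen.single hEi
    have hAji : anc E j i := Relation.TransGen.trans hAjjt hAjti
    have hine_jt : i ≠ φ j := by rintro rfl; exact hacyc _ hAjti
    set t := B (φ j) i / B (φ j) (φ j) with htdef
    have hjtjtpos : 0 < B (φ j) (φ j) := (hsgn _ _).2 (Or.inl rfl)
    have htpos : 0 < t := div_pos ((hsgn _ _).2 (Or.inr hAjti)) hjtjtpos
    have hchi2 : tdc E B (φ j) i = min 1 t := tdc_mid hsgn (hcol (φ j)) hmw hAjti
    have hchi2t : tdc Et Bt (φ j) i = min 1 t := (hchieq (φ j) i).symm.trans hchi2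
    have hmpos : 0 < tdc Et Bt (φ j) i := by
      rw [hchi2t]; exact lt_min one_pos htpos
    -- i is a descendant of φ j in D̃ as well
    have hAtjti : Anc Et (φ j) i := by
      obtain ⟨k, hk1, hk2, -, -⟩ := tdc_pos_elim hmpos
      have hkjt := initial_anc hjtinit hk1
      subst hkjt
      exact hk2
    have hBtjti_lt : Bt (φ j) i < 1 := by
      have h2 := two_le (B := Bt) hnnt (hcolt i) hAtjti (anc_refl i)
        (fun h => hine_jt h.symm)
      have hdpos : 0 < Bt i i := (hsgnt i i).2 (Or.inl rfl)
      linarith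
    have hchi2t' : tdc Et Bt (φ j) i = Bt (φ j) i := by
      rw [tdc_initial hjtinit hAtjti, hBtjtjt]
      exact min_eq_right hBtjti_lt.le
    have hteq : Bt (φ j) i = min 1 t := hchi2t'.symm.trans hchi2t
    have htlt : t < 1 := by
      by_contra h
      push_neg at h
      rw [min_eq_left h] at hteq
      exact absurd hteq (by linarith)
    have hteq' : Bt (φ j) i = t := by rw [hteq, min_eq_right htlt.le]
    -- χ(j, i) computed in D
    have hBji : B j i = a * t := by
      rw [hmw i (φ j) j hAjti hAjjt, ha, htdef]; ring
    have hchi3 : tdc E B j i = a * t := by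
      rw [tdc_initial hjinit (Or.inr hAji), hBjj, hBji]
      refine min_eq_right ?_
      nlinarith
    -- lower bound on χ(j, i) in D̃
    have hlb : min a t ≤ tdc Et Bt j i := by
      have hmem : (φ j) ∈ Finset.univ.filter (fun k => Anc Et k j ∧ Anc Et k i) := by
        simp only [Finset.mem_filter, Finset.mem_univ, true_and]
        exact ⟨Or.inr hAtjtj, hAtjti⟩
      have hle := Finset.single_le_sum (f := fun k => min (Bt k j) (Bt k i))
        (fun k _ => le_min (hnnt k j) (hnnt k i)) hmem
      have : min (Bt (φ j) j) (Bt (φ j) i) ≤ tdc Et Bt j i := hle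
      rwa [haeq, hteq'] at this
    have hub : tdc Et Bt j i = a * t := (hchieq j i).symm.trans hchi3
    rw [hub] at hlb
    rcases le_total a t with h | h
    · rw [min_eq_left h] at hlb; nlinarith
    · rw [min_eq_right h] at hlb; nlinarith
  refine ⟨key, ?_⟩
  intro jt hjt
  obtain ⟨j, hj, hφj⟩ := hbij.surjOn hjt
  by_cases hne : j = φ j
  · left
    refine ⟨?_, hjt⟩
    show ∀ k, ¬ E k jt
    rw [← hφj, ← hne]
    exact hj
  · right
    show ∀ k, ¬ E jt k
    rw [← hφj]
    exact key j hj hne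
end

section
/- Let B̄ be a standardized max-linear coefficient matrix of a recursive max-weighted model on a DAG D (b̄_{ji} = b̄_{jk}b̄_{ki}/b̄_{kk} along all paths). Then the minimum max-linear DAG of B̄ (the DAG with an edge k → i iff the edge k → i of D is the unique max-weighted path from k to i) equals the transitive reduction of D, i.e., the DAG obtained from D by deleting every edge k → i for which D contains another directed path from k to i. -/
/-! Since every path of `D` is max-weighted, the edge `k → i` is the unique max-weighted path
from `k` to `i` exactly when it is the unique path from `k` to `i`. A path other than the edge
leaves `k` along some edge `k → b` and then reaches `i`, so it exists iff some node lies strictly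
between `k` and `i`. -/

open Finset
open scoped Classical

/-- `isPathList E j i p`: `p` is (the list of nodes of) a directed path from `j` to `i`
in the graph with edge relation `E` (at least one edge). -/
def isPathList {d : ℕ} (E : Fin d → Fin d → Prop) (j i : Fin d)
    (p : List (Fin d)) : Prop :=
  p.Chain' E ∧ p.head? = some j ∧ p.getLast? = some i ∧ 2 ≤ p.length

/-- The weight of a path `p = [k₀, …, kₙ]` with respect to the standardized
coefficient matrix `B`: `b̄_{k₀k₀} ∏_ν (b̄_{k_ν k_{ν+1}} / b̄_{k_ν k_ν})`. -/
noncomputable def pathWeight {d : ℕ} (B : Matrix (Fin d) (Fin d) ℝ)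
    (p : List (Fin d)) : ℝ :=
  (match p.head? with
   | some j => B j j
   | none => 1) *
  ((p.zip p.tail).map (fun q => B q.1 q.2 / B q.1 q.1)).prod


section Paths

variable {d : ℕ} {E : Fin d → Fin d → Prop}

theorem isPathList_iff_isChain {j i : Fin d} {p : List (Fin d)} :
    isPathList E j i p ↔
      p.IsChain E ∧ p.head? = some j ∧ p.getLast? = some i ∧ 2 ≤ p.length :=
  Iff.rfl

theorem isPathList_iff {j i : Fin d} {p : List (Fin d)} :
    isPathList E j i p ↔
      (p = [j, i] ∧ E j i) ∨ ∃ b q, p = j :: q ∧ E j b ∧ isPathList E b i q := by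
  simp only [isPathList_iff_isChain]
  constructor
  · rintro ⟨hchain, hhead, hlast, hlen⟩
    match p, hchain, hhead, hlast, hlen with
    | [_, _], _, _, _, _ => simp_all
    | _ :: _ :: _ :: _, _, _, _, _ => simp_all
  · rintro (⟨rfl, h⟩ | ⟨b, q, rfl, h, hchain, hhead, hlast, hlen⟩)
    · simp [h]
    · match q, hchain, hhead, hlast, hlen with
      | _ :: _ :: _, _, _, _, _ => simp_all

theorem isPathList.transGen {j i : Fin d} {p : List (Fin d)} (hp : isPathList E j i p) :
    Relation.TransGen E j i := by
  induction p generalizing j with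
  | nil => simp [isPathList_iff_isChain] at hp
  | cons _ q ih =>
    rcases isPathList_iff.mp hp with ⟨-, h⟩ | ⟨b, t, hqt, h, hbt⟩
    · exact .single h
    · obtain ⟨-, rfl⟩ := List.cons.inj hqt
      exact .head h (ih hbt)

theorem Relation.TransGen.exists_isPathList {j i : Fin d} (h : Relation.TransGen E j i) :
    ∃ p, isPathList E j i p := by
  induction h using Relation.TransGen.head_induction_on with
  | single h => exact ⟨_, isPathList_iff.mpr (.inl ⟨rfl, h⟩)⟩
  | head h _ ih =>
    obtain ⟨p, hp⟩ := ih
    exact ⟨_, isPathList_iff.mpr (.inr ⟨_, p, rfl, h, hp⟩)⟩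

theorem exists_isPathList_ne_iff {k i : Fin d} :
    (∃ p, isPathList E k i p ∧ p ≠ [k, i]) ↔
      ∃ m, Relation.TransGen E k m ∧ Relation.TransGen E m i := by
  constructor
  · rintro ⟨p, hp, hne⟩
    rcases isPathList_iff.mp hp with ⟨rfl, -⟩ | ⟨b, q, -, h, hq⟩
    · exact absurd rfl hne
    · exact ⟨b, .single h, hq.transGen⟩
  · rintro ⟨m, hkm, hmi⟩
    obtain ⟨b, hkb, hbm⟩ := Relation.TransGen.head'_iff.mp hkm
    obtain ⟨q, hq⟩ := (Relation.TransGen.trans_right hbm hmi).exists_isPathList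
    refine ⟨k :: q, isPathList_iff.mpr (.inr ⟨b, q, rfl, hkb, hq⟩), ?_⟩
    rintro ⟨⟩
    exact absurd hq.2.2.2 (by simp)

end Paths

theorem stmt17_general {d : ℕ} (E : Fin d → Fin d → Prop)
    (B : Matrix (Fin d) (Fin d) ℝ)
    -- every path of `D` is max-weighted:
    (hmwAll : ∀ j i p, isPathList E j i p → B j i = pathWeight B p) :
    -- the minimum ML DAG (edge `k → i` of `D` is the unique max-weighted path
    -- from `k` to `i`) equals the transitive reduction of `D`:
    ∀ k i : Fin d,
      (E k i ∧ ∀ p, isPathList E k i p → B k i = pathWeight B p → p = [k, i]) ↔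
      (E k i ∧ ¬ ∃ m, Relation.TransGen E k m ∧ Relation.TransGen E m i) := by
  intro k i
  refine and_congr_right fun _ => ?_
  rw [← exists_isPathList_ne_iff, not_exists]
  refine forall_congr' fun p => ?_
  have hmw := hmwAll k i p
  tauto

theorem stmt17 {d : ℕ} (E : Fin d → Fin d → Prop)
    (hacyc : ∀ i, ¬ anc E i i)
    (B : Matrix (Fin d) (Fin d) ℝ)
    (hnn : ∀ j i, 0 ≤ B j i)
    (hsgn : ∀ j i, 0 < B j i ↔ Anc E j i)
    (hcol : ∀ i, ∑ k ∈ Finset.univ.filter (fun k => Anc E k i), B k i = 1)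
    -- every path of `D` is max-weighted:
    (hmwAll : ∀ j i p, isPathList E j i p → B j i = pathWeight B p) :
    -- the minimum ML DAG (edge `k → i` of `D` is the unique max-weighted path
    -- from `k` to `i`) equals the transitive reduction of `D`:
    ∀ k i : Fin d,
      (E k i ∧ ∀ p, isPathList E k i p → B k i = pathWeight B p → p = [k, i]) ↔
      (E k i ∧ ¬ ∃ m, Relation.TransGen E k m ∧ Relation.TransGen E m i) :=
  stmt17_general E B hmwAll
end

section
/- Let B̄ be a standardized max-linear coefficient matrix on a DAG D (b̄_{ji} > 0 iff j ∈ An(i), each column sums to 1) satisfying b̄_{ji} ≥ b̄_{jk}b̄_{ki}/b̄_{kk} for k ∈ an(i), j ∈ an(k), with χ the associated tail dependence matrix. Then for i ∈ V, j ∈ an(i), and k ∈ de(j) ∩ an(i): if every ℓ ∈ An(j) admits a max-weighted path to k through j, every ℓ ∈ An(j) admits a max-weighted path to i through j, and every ℓ ∈ An(k) admits a max-weighted path to i through k, then χ(j,i) = χ(j,k)·χ(k,i) < min(χ(j,k), χ(k,i)). -/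
/-!
If every ancestor `ℓ` of `j` has a max-weighted path to `i` through `j`, then on `An(j)` the
column `B · i` is the column `B · j` scaled by `r = B j i / B j j`. As column `j` sums to one,
this part of column `i` sums to `r`; it misses the entry `B i i > 0`, so `r < 1`, whence
`B ℓ i ≤ B ℓ j` on `An(j)` and `χ(j,i) = r`. Multiplicativity is the path condition through `k`
at `ℓ = j`, and the strict bound holds because each factor lies in `(0, 1)`.
-/

open Finset
open scoped Classical

section MaxLinear

variable {d : ℕ} {E : Fin d → Fin d → Prop} {B : Matrix (Fin d) (Fin d) ℝ}

noncomputable def An (E : Fin d → Fin d → Prop) (i : Fin d) : Finset (Fin d) :=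
  univ.filter (fun k => Anc E k i)

@[simp]
theorem mem_An {k i : Fin d} : k ∈ An E i ↔ Anc E k i := by
  simp [An]

theorem self_mem_An (i : Fin d) : i ∈ An E i :=
  mem_An.2 (Or.inl rfl)

theorem anc_of_Anc_of_anc {ℓ j i : Fin d} (hℓj : Anc E ℓ j) (hji : anc E j i) : anc E ℓ i := by
  rcases hℓj with rfl | hℓj
  · exact hji
  · exact hℓj.trans hji

theorem Anc_of_Anc_of_anc {ℓ j i : Fin d} (hℓj : Anc E ℓ j) (hji : anc E j i) : Anc E ℓ i :=
  Or.inr (anc_of_Anc_of_anc hℓj hji)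

theorem An_subset_An {j i : Fin d} (hji : anc E j i) : An E j ⊆ An E i :=
  fun _ hℓ => mem_An.2 (Anc_of_Anc_of_anc (mem_An.1 hℓ) hji)

theorem not_mem_An_of_anc (hacyc : ∀ i, ¬ anc E i i) {j i : Fin d} (hji : anc E j i) :
    i ∉ An E j :=
  fun hij => hacyc i (anc_of_Anc_of_anc (mem_An.1 hij) hji)

theorem sum_An_eq_div_diag {j i : Fin d} (hcol : ∑ k ∈ An E j, B k j = 1)
    (hpath : ∀ ℓ, Anc E ℓ j → B ℓ i = B ℓ j * B j i / B j j) :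
    ∑ ℓ ∈ An E j, B ℓ i = B j i / B j j :=
  calc ∑ ℓ ∈ An E j, B ℓ i = ∑ ℓ ∈ An E j, B ℓ j * (B j i / B j j) :=
        sum_congr rfl fun ℓ hℓ => by rw [hpath ℓ (mem_An.1 hℓ), mul_div_assoc]
    _ = B j i / B j j := by rw [← sum_mul, hcol, one_mul]

theorem div_diag_lt_one (hacyc : ∀ i, ¬ anc E i i) (hsgn : ∀ j i, 0 < B j i ↔ Anc E j i)
    (hcol : ∀ i, ∑ k ∈ An E i, B k i = 1) {j i : Fin d} (hji : anc E j i)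
    (hpath : ∀ ℓ, Anc E ℓ j → B ℓ i = B ℓ j * B j i / B j j) :
    B j i / B j j < 1 := by
  rw [← sum_An_eq_div_diag (hcol j) hpath, ← hcol i]
  exact sum_lt_sum_of_subset (An_subset_An hji) (self_mem_An i) (not_mem_An_of_anc hacyc hji)
    ((hsgn i i).2 (Or.inl rfl)) fun ℓ hℓ _ => ((hsgn ℓ i).2 (mem_An.1 hℓ)).le

theorem tdc_eq_div_diag (hacyc : ∀ i, ¬ anc E i i) (hsgn : ∀ j i, 0 < B j i ↔ Anc E j i)
    (hcol : ∀ i, ∑ k ∈ An E i, B k i = 1) {j i : Fin d} (hji : anc E j i)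
    (hpath : ∀ ℓ, Anc E ℓ j → B ℓ i = B ℓ j * B j i / B j j) :
    tdc E B j i = B j i / B j j := by
  have hlt := div_diag_lt_one hacyc hsgn hcol hji hpath
  have hfilter : univ.filter (fun ℓ => Anc E ℓ j ∧ Anc E ℓ i) = An E j :=
    filter_congr fun ℓ _ => and_iff_left_of_imp fun hℓj => Anc_of_Anc_of_anc hℓj hji
  rw [tdc, hfilter, ← sum_An_eq_div_diag (hcol j) hpath]
  refine sum_congr rfl fun ℓ hℓ => min_eq_right ?_
  rw [hpath ℓ (mem_An.1 hℓ), mul_div_assoc]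
  exact mul_le_of_le_one_right ((hsgn ℓ j).2 (mem_An.1 hℓ)).le hlt.le

end MaxLinear

theorem stmt19_general {d : ℕ} (E : Fin d → Fin d → Prop)
    (hacyc : ∀ i, ¬ anc E i i)
    (B : Matrix (Fin d) (Fin d) ℝ)
    (hsgn : ∀ j i, 0 < B j i ↔ Anc E j i)
    (hcol : ∀ i, ∑ k ∈ Finset.univ.filter (fun k => Anc E k i), B k i = 1)
    (i j k : Fin d) (hjk : anc E j k) (hki : anc E k i)
    (h1 : ∀ ℓ, Anc E ℓ j → B ℓ k = B ℓ j * B j k / B j j)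
    (h2 : ∀ ℓ, Anc E ℓ j → B ℓ i = B ℓ j * B j i / B j j)
    (h3 : ∀ ℓ, Anc E ℓ k → B ℓ i = B ℓ k * B k i / B k k) :
    tdc E B j i = tdc E B j k * tdc E B k i ∧
    tdc E B j i < min (tdc E B j k) (tdc E B k i) := by
  have hcol' : ∀ i, ∑ ℓ ∈ An E i, B ℓ i = 1 := hcol
  have hjj := (hsgn j j).2 (Or.inl rfl)
  have hkk := (hsgn k k).2 (Or.inl rfl)
  rw [tdc_eq_div_diag hacyc hsgn hcol' (hjk.trans hki) h2, tdc_eq_div_diag hacyc hsgn hcol' hjk h1,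
    tdc_eq_div_diag hacyc hsgn hcol' hki h3]
  have hprod : B j i / B j j = B j k / B j j * (B k i / B k k) := by
    rw [h3 j (Or.inr hjk)]
    field_simp
  have hjk_pos : 0 < B j k / B j j := div_pos ((hsgn j k).2 (Or.inr hjk)) hjj
  have hki_pos : 0 < B k i / B k k := div_pos ((hsgn k i).2 (Or.inr hki)) hkk
  refine ⟨hprod, hprod ▸ lt_min ?_ ?_⟩
  · exact mul_lt_of_lt_one_right hjk_pos (div_diag_lt_one hacyc hsgn hcol' hki h3)
  · exact mul_lt_of_lt_one_left hki_pos (div_diag_lt_one hacyc hsgn hcol' hjk h1)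

theorem stmt19 {d : ℕ} (E : Fin d → Fin d → Prop)
    (hacyc : ∀ i, ¬ anc E i i)
    (B : Matrix (Fin d) (Fin d) ℝ)
    (hnn : ∀ j i, 0 ≤ B j i)
    (hsgn : ∀ j i, 0 < B j i ↔ Anc E j i)
    (hcol : ∀ i, ∑ k ∈ Finset.univ.filter (fun k => Anc E k i), B k i = 1)
    (hineq : ∀ i k j, anc E k i → anc E j k → B j k * B k i / B k k ≤ B j i)
    (i j k : Fin d) (hji : anc E j i) (hjk : anc E j k) (hki : anc E k i)
    (h1 : ∀ ℓ, Anc E ℓ j → B ℓ k = B ℓ j * B j k / B j j)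
    (h2 : ∀ ℓ, Anc E ℓ j → B ℓ i = B ℓ j * B j i / B j j)
    (h3 : ∀ ℓ, Anc E ℓ k → B ℓ i = B ℓ k * B k i / B k k) :
    tdc E B j i = tdc E B j k * tdc E B k i ∧
    tdc E B j i < min (tdc E B j k) (tdc E B k i) :=
  stmt19_general E hacyc B hsgn hcol i j k hjk hki h1 h2 h3
end
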